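/- arXiv:1407.1674 — 2 statements merged into one kernel-verified Lean document; each statement's English description precedes it below -/
import Mathlib

section
/- Let f : Ω → ℝ̄ be measurable, P a probability on Ω = D_0(ℝ_+,ℝ^d), t ≥ 0, and {P^ω_t} a regular conditional probability distribution of P given ℱ_t with P^ω_t{ω' : ω' = ω on [0,t]} = 1. Define P^{t,ω}(F) = P^ω_t(ω ⊗_t F) and f^{t,ω}(ω̃) = f(ω ⊗_t ω̃). Then E^{P^{t,ω}}[f^{t,ω}] = E^P[f | ℱ_t](ω) for P-a.e. ω (with the convention ∞ − ∞ = −∞ in defining conditional expectations). -/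
/-!
Write `K ω = P^ω_t`. The disintegration identity says `K ∘ₘ P|_B = P|_B` for every `B ∈ ℱ_t`;
integrating `f` against both sides, the `ℱ_t`-measurable function `ω ↦ ∫ f d(K ω)` has the
defining property of `E^P[f | ℱ_t]`, so it is a version of it. On the other hand `K ω` is carried
by the paths agreeing with `ω` on `[0, t]`, all of which are of the form `ω ⊗_t ω̃`, so the image of
`P^{t,ω}` under `ω̃ ↦ ω ⊗_t ω̃` is `K ω`, and `∫ f^{t,ω} dP^{t,ω} = ∫ f d(K ω)` for every `ω`.
-/

open MeasureTheory Filter Set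
open scoped NNReal

/-- Path space `Ω = (ℝ_+ → ℝ^d)` carrying the product σ-field (on
`D_0(ℝ_+,ℝ^d)` this is the Borel σ-field of the Skorohod topology). -/
abbrev PathSpace (d : ℕ) := ℝ≥0 → EuclideanSpace ℝ (Fin d)

/-- The canonical filtration: `ℱ_t` is generated by the coordinates up to `t`. -/
noncomputable def canonicalFiltration (d : ℕ) (t : ℝ≥0) :
    MeasurableSpace (PathSpace d) :=
  ⨆ (s : ℝ≥0) (_ : s ≤ t), MeasurableSpace.comap (fun ω => ω s) inferInstance

/-- The concatenation `ω ⊗_t ω̃` of two paths at time `t`. -/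
noncomputable def concat {d : ℕ} (t : ℝ≥0) (ω ωt : PathSpace d) : PathSpace d :=
  fun u => if u < t then ω u else ω t + ωt (u - t)

open ProbabilityTheory

namespace MeasureTheory.Measure

variable {α β : Type*} {mα : MeasurableSpace α} {mβ : MeasurableSpace β}

section Comp

variable {E : Type*} [NormedAddCommGroup E] [NormedSpace ℝ E] {κ : Kernel α β} {μ : Measure α}
  {f : β → E}

theorem integrable_integral_of_integrable_comp (hf : Integrable f (κ ∘ₘ μ)) :
    Integrable (fun x ↦ ∫ y, f y ∂κ x) μ := by
  rw [comp_eq_comp_const_apply] at hf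
  simpa using hf.integral_comp

theorem integral_comp (hf : Integrable f (κ ∘ₘ μ)) :
    ∫ y, f y ∂(κ ∘ₘ μ) = ∫ x, ∫ y, f y ∂κ x ∂μ := by
  rw [comp_eq_comp_const_apply] at hf ⊢
  simpa using Kernel.integral_comp hf

end Comp

/-- `S` need not be measurable: in the application it is the set of paths agreeing with a given
path on `[0, t]`, which is not measurable for the product σ-field. -/
theorem map_eq_of_apply_eq_apply_image {μ : Measure β} [IsFiniteMeasure μ] {ν : Measure α}
    {φ : α → β} (hφ : Measurable φ) {S : Set β} (hS : μ S = μ univ) (hSφ : S ⊆ range φ)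
    (hν : ∀ F, MeasurableSet F → ν F = μ (φ '' F)) : ν.map φ = μ := by
  ext A hA
  rw [map_apply hφ hA, hν _ (hφ hA), image_preimage_eq_inter_range]
  refine le_antisymm (measure_mono inter_subset_left) ?_
  calc μ A = μ (S ∩ A) := by
        rw [measure_inter_eq_of_measure_eq hA hS (subset_univ S) (measure_ne_top μ S), univ_inter]
    _ ≤ μ (A ∩ range φ) := measure_mono fun x hx ↦ ⟨hx.2, hSφ hx.1⟩

end MeasureTheory.Measure

section Disintegration

variable {Ω E : Type*} {m mΩ : MeasurableSpace Ω} [NormedAddCommGroup E] [NormedSpace ℝ E]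
  [CompleteSpace E] {P : Measure Ω} {κ : Kernel[m] Ω Ω}

theorem comp_restrict_of_setLIntegral_eq (hm : m ≤ mΩ) {B : Set Ω}
    (hκ : ∀ A, MeasurableSet A → ∫⁻ ω in B, κ ω A ∂P = P (A ∩ B)) :
    κ.comap id (measurable_id'' hm) ∘ₘ P.restrict B = P.restrict B := by
  ext A hA
  rw [Measure.bind_apply hA (Kernel.aemeasurable _), Measure.restrict_apply hA]
  exact hκ A hA

theorem condExp_ae_eq_integral_of_setLIntegral_eq (hm : m ≤ mΩ) [IsFiniteMeasure P]
    (hκ : ∀ A B : Set Ω, MeasurableSet A → MeasurableSet[m] B → ∫⁻ ω in B, κ ω A ∂P = P (A ∩ B))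
    {f : Ω → E} (hfm : StronglyMeasurable f) (hf : Integrable f P) :
    P[f | m] =ᵐ[P] fun ω ↦ ∫ x, f x ∂κ ω := by
  set κ' := κ.comap id (measurable_id'' hm)
  have hcomp : ∀ B, MeasurableSet[m] B → κ' ∘ₘ P.restrict B = P.restrict B :=
    fun B hB ↦ comp_restrict_of_setLIntegral_eq hm (hκ · B · hB)
  refine (ae_eq_condExp_of_forall_setIntegral_eq hm hf (fun B hB _ ↦ ?_) (fun B hB _ ↦ ?_)
    hfm.integral_kernel.aestronglyMeasurable).symm
  all_goals have hfB : Integrable f (κ' ∘ₘ P.restrict B) := by rw [hcomp B hB]; exact hf.restrict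
  · exact Measure.integrable_integral_of_integrable_comp hfB
  · have h := Measure.integral_comp hfB
    rw [hcomp B hB] at h
    exact h.symm

end Disintegration

section PathSpace

variable {d : ℕ}

theorem canonicalFiltration_le (t : ℝ≥0) :
    canonicalFiltration d t ≤ (inferInstance : MeasurableSpace (PathSpace d)) :=
  iSup₂_le fun s _ ↦ (measurable_pi_apply s).comap_le

theorem measurable_concat (t : ℝ≥0) (ω : PathSpace d) : Measurable (concat t ω) := by
  refine measurable_pi_lambda _ fun u ↦ ?_
  by_cases h : u < t
  · simp [concat, h]
  · simpa [concat, h] using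
      (measurable_pi_apply (X := fun _ : ℝ≥0 ↦ EuclideanSpace ℝ (Fin d)) (u - t)).const_add (ω t)

theorem setOf_eqOn_subset_range_concat (t : ℝ≥0) (ω : PathSpace d) :
    {ω' : PathSpace d | ∀ s ≤ t, ω' s = ω s} ⊆ range (concat t ω) := by
  intro ω' hω'
  refine ⟨fun v ↦ ω' (t + v) - ω t, funext fun u ↦ ?_⟩
  by_cases h : u < t
  · simp [concat, h, hω' u h.le]
  · simp [concat, h, add_tsub_cancel_of_le (not_lt.1 h)]

end PathSpace

/-- Let `f` be measurable, `P` a probability on path space,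
`t ≥ 0`, and `{P^ω_t} = K` a regular conditional probability distribution of
`P` given `ℱ_t` concentrated on `{ω' : ω' = ω on [0,t]}`. Define
`P^{t,ω}(F) = P^ω_t(ω ⊗_t F)` and `f^{t,ω}(ω̃) = f(ω ⊗_t ω̃)`. Then
`E^{P^{t,ω}}[f^{t,ω}] = E^P[f | ℱ_t](ω)` for `P`-a.e. `ω`. -/
theorem stmt15 {d : ℕ} (t : ℝ≥0)
    (P : Measure (PathSpace d)) [IsProbabilityMeasure P]
    (f : PathSpace d → ℝ) (hfmeas : Measurable f) (hfint : Integrable f P)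
    (K : PathSpace d → Measure (PathSpace d))
    (hKprob : ∀ ω, IsProbabilityMeasure (K ω))
    (hKmeas : ∀ A : Set (PathSpace d), MeasurableSet A →
      Measurable[canonicalFiltration d t] fun ω => K ω A)
    (hKdisint : ∀ A B : Set (PathSpace d), MeasurableSet A →
      MeasurableSet[canonicalFiltration d t] B →
      ∫⁻ ω in B, K ω A ∂P = P (A ∩ B))
    (hKconc : ∀ ω, K ω {ω' | ∀ s ≤ t, ω' s = ω s} = 1)
    (Pt : PathSpace d → Measure (PathSpace d))
    (hPt : ∀ ω, ∀ F : Set (PathSpace d), MeasurableSet F →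
      Pt ω F = K ω ((fun ωt => concat t ω ωt) '' F)) :
    ∀ᵐ ω ∂P,
      ∫ ωt, f (concat t ω ωt) ∂(Pt ω) = (P[f | canonicalFiltration d t]) ω := by
  let κ : Kernel[canonicalFiltration d t] (PathSpace d) (PathSpace d) :=
    @Kernel.mk _ _ (canonicalFiltration d t) _ K
      ((@Measure.measurable_measure _ _ (canonicalFiltration d t) _ K).mpr hKmeas)
  have : IsMarkovKernel κ := ⟨hKprob⟩
  have hPt_map : ∀ ω, (Pt ω).map (concat t ω) = κ ω := fun ω ↦
    Measure.map_eq_of_apply_eq_apply_image (measurable_concat t ω)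
      (by rw [measure_univ]; exact hKconc ω) (setOf_eqOn_subset_range_concat t ω) (hPt ω)
  filter_upwards [condExp_ae_eq_integral_of_setLIntegral_eq (canonicalFiltration_le t) (κ := κ)
    hKdisint hfmeas.stronglyMeasurable hfint] with ω hω
  rw [hω, ← integral_map (measurable_concat t ω).aemeasurable hfmeas.aestronglyMeasurable,
    hPt_map ω]
end

section
/- Let A : [0,T] → ℝ be continuous and nondecreasing with A_0 = 0, and let C : [0,T] → ℝ be nondecreasing with dC ≪ dA. Define c_t = limsup_{n→∞} (C_t − C_{(t−1/n)∨0})/(A_t − A_{(t−1/n)∨0}) (with 0/0 := 0) when this limsup is finite and c_t = 0 otherwise. Then c is Borel measurable and C_t = C_0 + ∫_0^t c_s dA_s for all t ∈ [0,T]. -/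
/-!
Time change `y = A t`. Since `A` is continuous, `A_* dA = dy` on `(A 0, A t]`, and `dA`-almost
every point is not the right end of an interval on which `A` is constant; by `dC ≪ dA` the same
holds `dC`-a.e. Hence `ν = A_* (dC|_(0,t])` satisfies `ν (A s, A x] = C x - C s`, and `ν ≪ dy`.
The distribution function `G` of `ν` is Lebesgue-a.e. differentiable with derivative
`g = dν/dy`, so `dA`-a.e. the difference quotients of `C` against `A`, which are difference
quotients of `G` at `A x`, converge to `g (A x)`. Finally
`∫_(0,t] g (A s) dA_s = ∫_(A 0, A t] g dy = ν (A 0, A t] = C t - C 0`.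
-/

open MeasureTheory Filter Set
open scoped ENNReal
open scoped Topology

/-- The difference-quotient approximations
`(C_t − C_{(t−1/n)∨0}) / (A_t − A_{(t−1/n)∨0})`, computed in `ℝ≥0∞`
(so that `0/0 = 0`). -/
noncomputable def diffQuot (A C : StieltjesFunction ℝ) (n : ℕ) (t : ℝ) : ℝ≥0∞ :=
  ENNReal.ofReal (C t - C (max (t - 1 / (n + 1)) 0)) /
    ENNReal.ofReal (A t - A (max (t - 1 / (n + 1)) 0))

/-- The pathwise density `c = dC/dA`: the limit superior of the difference
quotients when it is finite, and `0` otherwise. -/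
noncomputable def stieltjesDeriv (A C : StieltjesFunction ℝ) (t : ℝ) : ℝ :=
  if Filter.limsup (fun n => diffQuot A C n t) atTop ≠ ⊤ then
    (Filter.limsup (fun n => diffQuot A C n t) atTop).toReal
  else 0

lemma apply_mem_Ioc_iff_of_forall_lt {α β : Type*} [LinearOrder α] [Preorder β] {f : α → β}
    (hf : Monotone f) {x : α} (hx : ∀ y < x, f y < f x) (s t : α) :
    f x ∈ Ioc (f s) (f t) ↔ x ∈ Ioc s t :=
  ⟨fun h => ⟨lt_of_not_ge fun hxs => lt_irrefl _ (h.1.trans_le (hf hxs)),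
      le_of_not_gt fun htx => lt_irrefl _ ((hx t htx).trans_le h.2)⟩,
    fun h => ⟨hx s h.1, hf h.2⟩⟩

lemma apply_le_apply_iff_of_forall_lt {α β : Type*} [LinearOrder α] [Preorder β] {f : α → β}
    (hf : Monotone f) {x : α} (hx : ∀ y < x, f y < f x) (u : α) : f x ≤ f u ↔ x ≤ u :=
  ⟨fun h => le_of_not_gt fun hux => lt_irrefl _ ((hx u hux).trans_le h), fun h => hf h⟩

namespace StieltjesFunction

lemma measureReal_Ioc (f : StieltjesFunction ℝ) {a b : ℝ} (hab : a ≤ b) :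
    f.measure.real (Ioc a b) = f b - f a := by
  rw [measureReal_def, f.measure_Ioc, ENNReal.toReal_ofReal (sub_nonneg.2 (f.mono hab))]

variable {A : StieltjesFunction ℝ}

lemma measure_preimage_singleton_of_continuous (hA : Continuous A) (v : ℝ) :
    A.measure (A ⁻¹' {v}) = 0 := by
  have hcover : A ⁻¹' {v} = ⋃ n : ℤ, A ⁻¹' {v} ∩ Icc (n : ℝ) (n + 1) := by
    rw [← inter_iUnion, iUnion_Icc_intCast, inter_univ]
  rw [hcover]
  refine measure_iUnion_null fun n => ?_
  set K := A ⁻¹' {v} ∩ Icc (n : ℝ) (n + 1)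
  have hK : IsCompact K := isCompact_Icc.inter_left (isClosed_singleton.preimage hA)
  rcases K.eq_empty_or_nonempty with hempty | hne
  · rw [hempty, measure_empty]
  obtain ⟨α, ⟨⟨hαv, -⟩, hαK⟩⟩ := hK.exists_isLeast hne
  obtain ⟨β, ⟨⟨hβv, -⟩, hβK⟩⟩ := hK.exists_isGreatest hne
  refine measure_mono_null (show K ⊆ Icc α β from fun x hx => ⟨hαK hx, hβK hx⟩) ?_
  rw [A.measure_Icc, hA.continuousWithinAt.leftLim_eq, hαv, hβv, sub_self, ENNReal.ofReal_zero]

lemma ae_forall_lt_apply_lt (hA : Continuous A) : ∀ᵐ x ∂A.measure, ∀ y < x, A y < A x := by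
  refine measure_mono_null (fun x hx => ?_)
    (measure_iUnion_null fun q : ℚ => measure_preimage_singleton_of_continuous hA (A q))
  obtain ⟨y, hyx, hAxy⟩ : ∃ y < x, A x ≤ A y := by simpa using hx
  obtain ⟨q, hyq, hqx⟩ := exists_rat_btwn hyx
  exact mem_iUnion.2 ⟨q, le_antisymm (hAxy.trans (A.mono hyq.le)) (A.mono hqx.le)⟩

lemma map_apply_Ioc_of_absolutelyContinuous (hA : Continuous A) {μ : Measure ℝ}
    (hμ : μ ≪ A.measure) (s t : ℝ) : μ.map A (Ioc (A s) (A t)) = μ (Ioc s t) := by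
  rw [Measure.map_apply A.mono.measurable measurableSet_Ioc]
  refine measure_congr (eventuallyEq_set.2 ?_)
  filter_upwards [hμ.ae_le (ae_forall_lt_apply_lt hA)] with x hx
  exact apply_mem_Ioc_iff_of_forall_lt A.mono hx s t

lemma map_measure_restrict_Ioc (hA : Continuous A) {a b : ℝ} (hab : a ≤ b) :
    (A.measure.restrict (Ioc a b)).map A = volume.restrict (Ioc (A a) (A b)) := by
  have : IsFiniteMeasure (A.measure.restrict (Ioc a b)) :=
    isFiniteMeasure_restrict.2 measure_Ioc_lt_top.ne
  refine Measure.ext_of_Iic _ _ fun c => ?_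
  rw [Measure.map_apply A.mono.measurable measurableSet_Iic,
    Measure.restrict_apply measurableSet_Iic, inter_comm, Ioc_inter_Iic, Real.volume_Ioc]
  rcases lt_or_ge c (A a) with hc | hc
  · rw [Measure.restrict_apply (A.mono.measurable measurableSet_Iic)]
    have hempty : A ⁻¹' Iic c ∩ Ioc a b = ∅ := eq_empty_of_forall_notMem fun x hx =>
      lt_irrefl _ ((mem_Iic.1 hx.1).trans_lt (hc.trans_le (A.mono hx.2.1.le)))
    rw [hempty, measure_empty, eq_comm, ENNReal.ofReal_eq_zero, sub_nonpos]
    exact (min_le_right _ _).trans hc.le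
  have hmem : min (A b) c ∈ Icc (A a) (A b) := ⟨le_min (A.mono hab) hc, min_le_left _ _⟩
  obtain ⟨u, hu, hAu⟩ := intermediate_value_Icc hab hA.continuousOn hmem
  calc A.measure.restrict (Ioc a b) (A ⁻¹' Iic c)
      = A.measure.restrict (Ioc a b) (Iic u) := by
        refine measure_congr (eventuallyEq_set.2 ?_)
        filter_upwards [ae_restrict_of_ae (ae_forall_lt_apply_lt hA),
          ae_restrict_mem measurableSet_Ioc] with x hx hxab
        rw [mem_preimage, mem_Iic, mem_Iic, ← apply_le_apply_iff_of_forall_lt A.mono hx u, hAu]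
        simp [A.mono hxab.2]
    _ = ENNReal.ofReal (min (A b) c - A a) := by
        rw [Measure.restrict_apply measurableSet_Iic, inter_comm, Ioc_inter_Iic,
          min_eq_right hu.2, A.measure_Ioc, hAu]

end StieltjesFunction

lemma exists_stieltjesFunction_measure_eq (ν : Measure ℝ) [IsFiniteMeasure ν] :
    ∃ G : StieltjesFunction ℝ, G.measure = ν := by
  rcases eq_zero_or_neZero ν with rfl | hν
  · exact ⟨0, StieltjesFunction.measure_zero⟩
  refine ⟨(ν univ).toNNReal • ProbabilityTheory.cdf ((ν univ)⁻¹ • ν), ?_⟩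
  rw [StieltjesFunction.measure_smul, ProbabilityTheory.measure_cdf]
  ext s -
  rw [Measure.smul_apply, Measure.smul_apply, ENNReal.smul_def, smul_eq_mul, smul_eq_mul,
    ENNReal.coe_toNNReal (measure_ne_top _ _), ← mul_assoc,
    ENNReal.mul_inv_cancel (NeZero.ne _) (measure_ne_top _ _), one_mul]

section Density

variable {A C : StieltjesFunction ℝ}

lemma measurable_diffQuot (n : ℕ) : Measurable (diffQuot A C n) := by
  have hAm := A.mono.measurable
  have hCm := C.mono.measurable
  have hlag : Measurable fun t : ℝ => max (t - 1 / (n + 1)) 0 := by fun_prop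
  exact (ENNReal.measurable_ofReal.comp (hCm.sub (hCm.comp hlag))).div
    (ENNReal.measurable_ofReal.comp (hAm.sub (hAm.comp hlag)))

lemma measurable_stieltjesDeriv : Measurable (stieltjesDeriv A C) := by
  have hlimsup : Measurable fun t => limsup (fun n => diffQuot A C n t) atTop :=
    .limsup measurable_diffQuot
  exact Measurable.ite (hlimsup (measurableSet_singleton ⊤)).compl hlimsup.ennreal_toReal
    measurable_const

lemma stieltjesDeriv_eq_of_tendsto {x d : ℝ}
    (h : Tendsto (fun n => diffQuot A C n x) atTop (𝓝 (ENNReal.ofReal d))) (hd : 0 ≤ d) :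
    stieltjesDeriv A C x = d := by
  rw [stieltjesDeriv, h.limsup_eq, if_pos ENNReal.ofReal_ne_top, ENNReal.toReal_ofReal hd]

lemma stieltjesDeriv_eq_of_hasDerivAt {G : ℝ → ℝ} (hA : Continuous A) {x d : ℝ}
    (hx0 : 0 < x) (hx : ∀ y < x, A y < A x)
    (hCG : ∀ s ∈ Icc 0 x, C x - C s = G (A x) - G (A s)) (hG : HasDerivAt G d (A x))
    (hd : 0 ≤ d) : stieltjesDeriv A C x = d := by
  set s : ℕ → ℝ := fun n => max (x - 1 / (n + 1)) 0
  have hs_lt : ∀ n, s n < x := fun n => max_lt (sub_lt_self x Nat.one_div_pos_of_nat) hx0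
  have hs_mem : ∀ n, s n ∈ Icc 0 x := fun n => ⟨le_max_right _ _, (hs_lt n).le⟩
  have hs : Tendsto s atTop (𝓝 x) := by
    have := ((tendsto_const_nhds (x := x)).sub tendsto_one_div_add_atTop_nhds_zero_nat).max
        (tendsto_const_nhds (x := (0 : ℝ)))
    rwa [sub_zero, max_eq_left hx0.le] at this
  have hAs : Tendsto (fun n => A (s n)) atTop (𝓝[≠] (A x)) :=
    tendsto_nhdsWithin_of_tendsto_nhds_of_eventually_within _ ((hA.tendsto x).comp hs)
      (Eventually.of_forall fun n => (hx _ (hs_lt n)).ne)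
  have hslope : Tendsto (fun n => (C x - C (s n)) / (A x - A (s n))) atTop (𝓝 d) :=
    ((hasDerivAt_iff_tendsto_slope.1 hG).comp hAs).congr fun n => by
      rw [Function.comp_apply, slope_comm, slope_def_field, hCG _ (hs_mem n)]
  refine stieltjesDeriv_eq_of_tendsto ((ENNReal.tendsto_ofReal hslope).congr fun n => ?_) hd
  rw [ENNReal.ofReal_div_of_pos (sub_pos.2 (hx _ (hs_lt n)))]
  rfl

theorem integral_stieltjesDeriv (hA : Continuous A) {t : ℝ} (ht : 0 ≤ t)
    (hAC : C.measure.restrict (Ioc 0 t) ≪ A.measure.restrict (Ioc 0 t)) :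
    ∫ s in Ioc 0 t, stieltjesDeriv A C s ∂A.measure = C t - C 0 := by
  have : IsFiniteMeasure (C.measure.restrict (Ioc 0 t)) :=
    isFiniteMeasure_restrict.2 measure_Ioc_lt_top.ne
  set ν := (C.measure.restrict (Ioc 0 t)).map A
  obtain ⟨G, hGν⟩ := exists_stieltjesFunction_measure_eq ν
  have hνvol : ν ≪ volume := by
    have := hAC.map A.mono.measurable
    rw [StieltjesFunction.map_measure_restrict_Ioc hA ht] at this
    exact this.trans (Measure.absolutelyContinuous_of_le Measure.restrict_le_self)
  have hν_Ioc {s x : ℝ} (hs : 0 ≤ s) (hsx : s ≤ x) (hxt : x ≤ t) :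
      ν.real (Ioc (A s) (A x)) = C x - C s := by
    rw [measureReal_def, StieltjesFunction.map_apply_Ioc_of_absolutelyContinuous hA
      (hAC.trans (Measure.absolutelyContinuous_of_le Measure.restrict_le_self)),
      Measure.restrict_apply measurableSet_Ioc, inter_eq_left.2 (Ioc_subset_Ioc hs hxt),
      ← measureReal_def, C.measureReal_Ioc hsx]
  set g := ν.rnDeriv volume
  have hderiv : ∀ᵐ x ∂A.measure.restrict (Ioc 0 t), HasDerivAt G (g (A x)).toReal (A x) := by
    refine ae_of_ae_map (p := fun y => HasDerivAt G (g y).toReal y)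
      A.mono.measurable.aemeasurable ?_
    rw [StieltjesFunction.map_measure_restrict_Ioc hA ht]
    have := G.ae_hasDerivAt
    rw [hGν] at this
    exact ae_restrict_of_ae this
  have hae : ∀ᵐ x ∂A.measure.restrict (Ioc 0 t), stieltjesDeriv A C x = (g (A x)).toReal := by
    filter_upwards [hderiv, ae_restrict_of_ae (StieltjesFunction.ae_forall_lt_apply_lt hA),
      ae_restrict_mem measurableSet_Ioc] with x hGx hx hxt
    refine stieltjesDeriv_eq_of_hasDerivAt hA hxt.1 hx (fun s hs => ?_) hGx ENNReal.toReal_nonneg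
    rw [← hν_Ioc hs.1 hs.2 hxt.2, ← hGν, G.measureReal_Ioc (A.mono hs.2)]
  calc ∫ x in Ioc 0 t, stieltjesDeriv A C x ∂A.measure
      = ∫ x in Ioc 0 t, (g (A x)).toReal ∂A.measure := integral_congr_ae hae
    _ = ∫ y in Ioc (A 0) (A t), (g y).toReal := by
      rw [← StieltjesFunction.map_measure_restrict_Ioc hA ht, integral_map
        A.mono.measurable.aemeasurable
        (Measure.measurable_rnDeriv _ _).ennreal_toReal.aestronglyMeasurable]
    _ = ν.real (Ioc (A 0) (A t)) := Measure.setIntegral_toReal_rnDeriv hνvol _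
    _ = C t - C 0 := hν_Ioc le_rfl ht le_rfl

end Density

theorem stmt19_general (T : ℝ) (A C : StieltjesFunction ℝ)
    (hAcont : Continuous A)
    (hAC : C.measure.restrict (Set.Icc 0 T) ≪ A.measure.restrict (Set.Icc 0 T)) :
    Measurable (stieltjesDeriv A C) ∧
    ∀ t ∈ Set.Icc (0 : ℝ) T,
      C t = C 0 + ∫ s in Set.Ioc (0 : ℝ) t, stieltjesDeriv A C s ∂A.measure := by
  refine ⟨measurable_stieltjesDeriv, fun t ht => ?_⟩
  have hsub : Ioc 0 t ⊆ Icc 0 T := Ioc_subset_Icc_self.trans (Icc_subset_Icc_right ht.2)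
  have hAC_t := hAC.restrict (Ioc 0 t)
  rw [Measure.restrict_restrict measurableSet_Ioc, Measure.restrict_restrict measurableSet_Ioc,
    inter_eq_left.2 hsub] at hAC_t
  rw [integral_stieltjesDeriv hAcont ht.1 hAC_t]
  ring

/-- Let `A` be continuous and nondecreasing with `A 0 = 0`, and
`C` nondecreasing with `dC ≪ dA` on `[0,T]`. Then the density
`c_t = limsup_n (C_t − C_{(t−1/n)∨0})/(A_t − A_{(t−1/n)∨0})` (with `0/0 = 0`,
set to `0` when the limsup is infinite) is Borel measurable and
`C_t = C_0 + ∫_0^t c_s dA_s` for all `t ∈ [0,T]`. -/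
theorem stmt19 (T : ℝ) (hT : 0 < T) (A C : StieltjesFunction ℝ)
    (hAcont : Continuous A) (hA0 : A 0 = 0)
    (hAC : C.measure.restrict (Set.Icc 0 T) ≪ A.measure.restrict (Set.Icc 0 T)) :
    Measurable (stieltjesDeriv A C) ∧
    ∀ t ∈ Set.Icc (0 : ℝ) T,
      C t = C 0 + ∫ s in Set.Ioc (0 : ℝ) t, stieltjesDeriv A C s ∂A.measure :=
  stmt19_general T A C hAcont hAC
end
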